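/- arXiv:1003.0963 — 2 statements merged into one kernel-verified Lean document; each statement's English description precedes it below -/
import Mathlib

section
/- Let G be a locally compact, totally disconnected local group. Then some restriction G|U of G is a compact topological group; that is, there is a compact symmetric open neighborhood U of 1 in G with U×U ⊆ Ω and xy ∈ U for all x,y ∈ U, so that U with the induced operations is a compact topological group. -/
open scoped Topology

universe u v

section LocalGroupBasics

variable {G : Type u} {G' : Type v}

/-- A subset `X` of `G` is *symmetric* if `X = X⁻¹`, i.e. membership in `X` is
invariant under the inversion map. -/
def IsSymmetricSet (inv : G → G) (X : Set G) : Prop := ∀ x, x ∈ X ↔ inv x ∈ X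

/-- The data `(one, inv, dom, mul)` on a topological space `G` is a *local group*:
`G` is Hausdorff, `dom ⊆ G × G` is open, inversion is continuous, multiplication is
continuous on `dom`, and the identity, inverse and (local) associativity axioms hold.
(Here `mul` is a total function, but its values outside `dom` are irrelevant:
all axioms refer only to products taken inside `dom`.) -/
structure IsLocalGroup [TopologicalSpace G] (one : G) (inv : G → G)
    (dom : Set (G × G)) (mul : G → G → G) : Prop where
  t2 : T2Space G
  isOpen_dom : IsOpen dom
  continuous_inv : Continuous inv
  continuousOn_mul : ContinuousOn (fun p : G × G => mul p.1 p.2) dom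
  mem_one_left : ∀ x : G, (one, x) ∈ dom
  mem_one_right : ∀ x : G, (x, one) ∈ dom
  one_mul : ∀ x : G, mul one x = x
  mul_one : ∀ x : G, mul x one = x
  mem_inv_left : ∀ x : G, (inv x, x) ∈ dom
  mem_inv_right : ∀ x : G, (x, inv x) ∈ dom
  inv_mul : ∀ x : G, mul (inv x) x = one
  mul_inv : ∀ x : G, mul x (inv x) = one
  assoc : ∀ x y z : G, (x, y) ∈ dom → (y, z) ∈ dom →
    ((mul x y, z) ∈ dom ∨ (x, mul y z) ∈ dom) →
    (mul x y, z) ∈ dom ∧ (x, mul y z) ∈ dom ∧ mul (mul x y) z = mul x (mul y z)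

/-- `abc` is defined: `(a,b) ∈ Ω`, `(b,c) ∈ Ω` and `(ab,c) ∈ Ω`. -/
def TripleDefined (dom : Set (G × G)) (mul : G → G → G) (a b c : G) : Prop :=
  (a, b) ∈ dom ∧ (b, c) ∈ dom ∧ (mul a b, c) ∈ dom

/-- A *subgroup* of the local group: a symmetric subset `H` with `1 ∈ H`,
`H × H ⊆ Ω` and `xy ∈ H` for all `x, y ∈ H`. -/
def IsLGSubgroup (one : G) (inv : G → G) (dom : Set (G × G)) (mul : G → G → G)
    (H : Set G) : Prop :=
  IsSymmetricSet inv H ∧ one ∈ H ∧ ∀ x ∈ H, ∀ y ∈ H, (x, y) ∈ dom ∧ mul x y ∈ H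

/-- A *normal subgroup* of the local group: a subgroup `N` such that for all `x ∈ N`
and all `a ∈ G`, `a * x * a⁻¹` is defined and lies in `N`. -/
def IsLGNormalSubgroup (one : G) (inv : G → G) (dom : Set (G × G)) (mul : G → G → G)
    (N : Set G) : Prop :=
  IsLGSubgroup one inv dom mul N ∧
    ∀ x ∈ N, ∀ a : G, TripleDefined dom mul a x (inv a) ∧ mul (mul a x) (inv a) ∈ N

/-- A *morphism* of local groups: a continuous map `φ` such that whenever
`(x,y) ∈ Ω_G`, also `(φ x, φ y) ∈ Ω_{G'}` and `φ(xy) = φ(x)φ(y)`. -/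
def IsLGHom [TopologicalSpace G] [TopologicalSpace G'] (dom : Set (G × G))
    (mul : G → G → G) (dom' : Set (G' × G')) (mul' : G' → G' → G') (φ : G → G') : Prop :=
  Continuous φ ∧
    ∀ x y : G, (x, y) ∈ dom → (φ x, φ y) ∈ dom' ∧ φ (mul x y) = mul' (φ x) (φ y)

/-- A morphism is *strong* if `(φ x, φ y) ∈ Ω_{G'}` implies `(x, y) ∈ Ω_G`. -/
def IsStrong (dom : Set (G × G)) (dom' : Set (G' × G')) (φ : G → G') : Prop :=
  ∀ x y : G, (φ x, φ y) ∈ dom' → (x, y) ∈ dom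

/-- An *isomorphism* of local groups: a morphism with a two-sided inverse that is
also a morphism. -/
def IsLGIso [TopologicalSpace G] [TopologicalSpace G'] (dom : Set (G × G))
    (mul : G → G → G) (dom' : Set (G' × G')) (mul' : G' → G' → G') (φ : G → G') : Prop :=
  IsLGHom dom mul dom' mul' φ ∧
    ∃ ψ : G' → G, IsLGHom dom' mul' dom mul ψ ∧
      Function.LeftInverse ψ φ ∧ Function.RightInverse ψ φ

/-- A map `ι : G → G'` is *open onto its image* if the image of every open set
is open in the subspace `ι(G)` of `G'`. -/
def IsOpenOntoImage [TopologicalSpace G] [TopologicalSpace G'] (ι : G → G') : Prop :=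
  ∀ O : Set G, IsOpen O → ∃ O' : Set G', IsOpen O' ∧ O' ∩ Set.range ι = ι '' O

end LocalGroupBasics

section Restriction

variable {G : Type u}

/-- The identity of the restriction `G|U`. -/
def restrictOne (one : G) (U : Set G) (h : one ∈ U) : ↥U := ⟨one, h⟩

open Classical in
/-- The inversion of the restriction `G|U` (with an irrelevant junk value on
points whose inverse falls outside `U`; when `U` is symmetric this never happens). -/
noncomputable def restrictInv (inv : G → G) (U : Set G) : ↥U → ↥U := fun x =>
  if h : inv ↑x ∈ U then ⟨inv ↑x, h⟩ else x

/-- The domain `Ω_U = {(x,y) ∈ Ω ∩ (U × U) : xy ∈ U}` of the restriction `G|U`. -/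
def restrictDom (dom : Set (G × G)) (mul : G → G → G) (U : Set G) : Set (↥U × ↥U) :=
  {p | ((p.1 : G), (p.2 : G)) ∈ dom ∧ mul ↑p.1 ↑p.2 ∈ U}

open Classical in
/-- The product of the restriction `G|U` (with an irrelevant junk value outside
`Ω_U`). -/
noncomputable def restrictMul (mul : G → G → G) (U : Set G) : ↥U → ↥U → ↥U := fun x y =>
  if h : mul ↑x ↑y ∈ U then ⟨mul ↑x ↑y, h⟩ else x

end Restriction

section Cosets

variable {G : Type u}

/-- The left coset `aN`. -/
def lCoset (mul : G → G → G) (N : Set G) (a : G) : Set G := {y | ∃ x ∈ N, y = mul a x}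

/-- The right coset `Na`. -/
def rCoset (mul : G → G → G) (N : Set G) (a : G) : Set G := {y | ∃ x ∈ N, y = mul x a}

/-- The underlying set `{aN : a ∈ G}` of the quotient `G/N`. -/
def Cosets (mul : G → G → G) (N : Set G) : Type u :=
  {A : Set G // ∃ a : G, A = lCoset mul N a}

/-- The canonical map `π : G → G/N`, `π(a) = aN`. -/
def cosetMap (mul : G → G → G) (N : Set G) (a : G) : Cosets mul N :=
  ⟨lCoset mul N a, a, rfl⟩

/-- The quotient topology on `G/N`. -/
def cosetTop [t : TopologicalSpace G] (mul : G → G → G) (N : Set G) :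
    TopologicalSpace (Cosets mul N) :=
  t.coinduced (cosetMap mul N)

/-- The domain `Ω_{G/N} = {(aN, bN) : (a,b) ∈ Ω}` of the quotient `G/N`. -/
def cosetDom (dom : Set (G × G)) (mul : G → G → G) (N : Set G) :
    Set (Cosets mul N × Cosets mul N) :=
  {p | ∃ a b : G, (a, b) ∈ dom ∧ p = (cosetMap mul N a, cosetMap mul N b)}

end Cosets

section NSS

/-- A local group has *no small subgroups* (NSS) if some neighborhood of the
identity contains no subgroup other than `{1}`. (The topology is an explicit
argument, so that this can be applied to quotient topologies.) -/
def HasNSS {G : Type u} (t : TopologicalSpace G) (one : G) (inv : G → G)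
    (dom : Set (G × G)) (mul : G → G → G) : Prop :=
  ∃ W ∈ @nhds G t one, ∀ K : Set G, IsLGSubgroup one inv dom mul K → K ⊆ W → K = {one}

end NSS

section TopGroup

/-- `H`, with a given group structure and topology, is a topological group whose
operations are compatible with the ambient local group data on `G ⊇ H`. -/
def GroupStructureCompatible {G : Type u} [TopologicalSpace G] (one : G) (inv : G → G)
    (mul : G → G → G) (H : Set G) [Group ↥H] : Prop :=
  (((1 : ↥H) : G) = one) ∧ (∀ a b : ↥H, ((a * b : ↥H) : G) = mul ↑a ↑b) ∧
    (∀ a : ↥H, ((a⁻¹ : ↥H) : G) = inv ↑a) ∧ IsTopologicalGroup ↥H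

/-- The restriction `G|U` is isomorphic, as a local group, to the restriction `H|V`
of the (Hausdorff) topological group `H` to some symmetric open neighborhood `V` of
its identity. -/
def IsoToGroupRestriction {G : Type u} [TopologicalSpace G]
    (dom : Set (G × G)) (mul : G → G → G) (U : Set G)
    (H : Type u) [TopologicalSpace H] [Group H] : Prop :=
  IsTopologicalGroup H ∧ T2Space H ∧
    ∃ V : Set H, IsOpen V ∧ (1 : H) ∈ V ∧ IsSymmetricSet (fun h => h⁻¹) V ∧
      ∃ φ : ↥U → ↥V,
        IsLGIso (restrictDom dom mul U) (restrictMul mul U)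
          (restrictDom Set.univ (fun a b : H => a * b) V)
          (restrictMul (fun a b : H => a * b) V) φ

/-- The local group `(G, one, inv, dom, mul)` is *locally isomorphic to a
topological group*: some restriction of it is isomorphic, as a local group, to a
restriction of a (Hausdorff) topological group. -/
def LocallyIsoToTopGroup {G : Type u} [TopologicalSpace G] (one : G) (inv : G → G)
    (dom : Set (G × G)) (mul : G → G → G) : Prop :=
  ∃ U : Set G, IsOpen U ∧ one ∈ U ∧ IsSymmetricSet inv U ∧
    ∃ (H : Type u) (tH : TopologicalSpace H) (gH : Group H),
      @IsoToGroupRestriction G _ dom mul U H tH gH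

end TopGroup

/-!
Van Dantzig's argument. Total disconnectedness and local compactness give a compact open
neighbourhood `C` of `1` with `C × C ⊆ Ω`. The set `S = {x ∈ C | C x ⊆ C}` contains `1` and is
closed under products; it is open by the tube lemma (`C` is compact and `C x ⊆ C` is an open
condition on `x`), and closed since `C` is closed and each `x ↦ c x` is continuous on `C`.
Then `U = S ∩ S⁻¹` is a compact open subgroup of `G`, on which the local group operations
are total, giving a compact topological group.
-/

theorem exists_isCompact_isOpen_subset {X : Type*} [TopologicalSpace X] [LocallyCompactSpace X]
    [T2Space X] [TotallyDisconnectedSpace X] {x : X} {O : Set X} (hO : IsOpen O) (hx : x ∈ O) :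
    ∃ C : Set X, IsCompact C ∧ IsOpen C ∧ x ∈ C ∧ C ⊆ O := by
  obtain ⟨K, hK, hxK, hKO⟩ := exists_compact_subset hO hx
  obtain ⟨C, hC, hxC, hCK⟩ :=
    loc_compact_Haus_tot_disc_of_zero_dim.mem_nhds_iff.1 (isOpen_interior.mem_nhds hxK)
  have hCK' : C ⊆ K := hCK.trans interior_subset
  exact ⟨C, hK.of_isClosed_subset hC.1 hCK', hC.2, hxC, hCK'.trans hKO⟩

namespace IsLocalGroup

variable {G : Type u} [TopologicalSpace G] {one : G} {inv : G → G}
  {dom : Set (G × G)} {mul : G → G → G}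

theorem inv_eq_of_mul_eq_one (hG : IsLocalGroup one inv dom mul) {a b : G}
    (hab : (a, b) ∈ dom) (h : mul a b = one) : inv a = b := by
  obtain ⟨-, -, hassoc⟩ := hG.assoc (inv a) a b (hG.mem_inv_left a) hab
    (Or.inl (by rw [hG.inv_mul]; exact hG.mem_one_left b))
  rwa [hG.inv_mul, hG.one_mul, h, hG.mul_one, eq_comm] at hassoc

theorem inv_one (hG : IsLocalGroup one inv dom mul) : inv one = one :=
  hG.inv_eq_of_mul_eq_one (hG.mem_one_left one) (hG.one_mul one)

theorem inv_inv (hG : IsLocalGroup one inv dom mul) (x : G) : inv (inv x) = x :=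
  hG.inv_eq_of_mul_eq_one (hG.mem_inv_left x) (hG.inv_mul x)

theorem mul_inv_rev (hG : IsLocalGroup one inv dom mul) {a b : G}
    (hab : (a, b) ∈ dom) (hba : (inv b, inv a) ∈ dom) :
    inv (mul a b) = mul (inv b) (inv a) := by
  obtain ⟨hab_b, -, h⟩ := hG.assoc a b (inv b) hab (hG.mem_inv_right b)
    (Or.inr (by rw [hG.mul_inv]; exact hG.mem_one_right a))
  rw [hG.mul_inv, hG.mul_one] at h
  obtain ⟨-, habba, h'⟩ := hG.assoc (mul a b) (inv b) (inv a) hab_b hba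
    (Or.inl (by rw [h]; exact hG.mem_inv_right a))
  rw [h, hG.mul_inv] at h'
  exact hG.inv_eq_of_mul_eq_one habba h'.symm

theorem exists_isOpen_prod_subset_dom (hG : IsLocalGroup one inv dom mul) :
    ∃ O : Set G, IsOpen O ∧ one ∈ O ∧ O ×ˢ O ⊆ dom := by
  obtain ⟨A, B, hA, hB, hA1, hB1, hAB⟩ :=
    isOpen_prod_iff.1 hG.isOpen_dom one one (hG.mem_one_left one)
  exact ⟨A ∩ B, hA.inter hB, ⟨hA1, hB1⟩,
    (Set.prod_mono Set.inter_subset_left Set.inter_subset_right).trans hAB⟩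

end IsLocalGroup

section RightStabilizer

variable {G : Type u} {mul : G → G → G} {C : Set G}

def rightStabilizer (mul : G → G → G) (C : Set G) : Set G :=
  {x | x ∈ C ∧ ∀ c ∈ C, mul c x ∈ C}

theorem rightStabilizer_subset : rightStabilizer mul C ⊆ C := fun _ hx => hx.1

variable [TopologicalSpace G] {one : G} {inv : G → G} {dom : Set (G × G)}

theorem one_mem_rightStabilizer (hG : IsLocalGroup one inv dom mul) (hC : one ∈ C) :
    one ∈ rightStabilizer mul C :=
  ⟨hC, fun c hc => by rwa [hG.mul_one]⟩

theorem mul_mem_rightStabilizer (hG : IsLocalGroup one inv dom mul) (hCdom : C ×ˢ C ⊆ dom)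
    {x y : G} (hx : x ∈ rightStabilizer mul C) (hy : y ∈ rightStabilizer mul C) :
    mul x y ∈ rightStabilizer mul C := by
  refine ⟨hy.2 x hx.1, fun c hc => ?_⟩
  have hcx := hx.2 c hc
  obtain ⟨-, -, h⟩ := hG.assoc c x y (hCdom ⟨hc, hx.1⟩) (hCdom ⟨hx.1, hy.1⟩)
    (Or.inl (hCdom ⟨hcx, hy.1⟩))
  rw [← h]
  exact hy.2 _ hcx

theorem isOpen_rightStabilizer (hG : IsLocalGroup one inv dom mul) (hCc : IsCompact C)
    (hCo : IsOpen C) (hCdom : C ×ˢ C ⊆ dom) : IsOpen (rightStabilizer mul C) := by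
  have hD : IsOpen (dom ∩ (fun p : G × G => mul p.1 p.2) ⁻¹' C) :=
    hG.continuousOn_mul.isOpen_inter_preimage hG.isOpen_dom hCo
  refine isOpen_iff_mem_nhds.2 fun x hx => ?_
  have hCx : ∀ᶠ y in 𝓝 x, ∀ c ∈ C, mul c y ∈ C :=
    hCc.eventually_forall_of_forall_eventually fun c hc =>
      have hcx : (c, x) ∈ dom ∩ (fun p : G × G => mul p.1 p.2) ⁻¹' C :=
        ⟨hCdom ⟨hc, hx.1⟩, hx.2 c hc⟩
      Filter.mem_of_superset ((hD.preimage continuous_swap).mem_nhds (x := (x, c)) hcx)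
        fun _ hz => hz.2
  exact Filter.inter_mem (hCo.mem_nhds hx.1) hCx

theorem isClosed_rightStabilizer (hG : IsLocalGroup one inv dom mul) (hC : IsClosed C)
    (hCdom : C ×ˢ C ⊆ dom) : IsClosed (rightStabilizer mul C) := by
  have hS : rightStabilizer mul C = C ∩ ⋂ c ∈ C, C ∩ mul c ⁻¹' C := by
    ext x
    simp only [rightStabilizer, Set.mem_ofPred_eq, Set.mem_inter_iff, Set.mem_iInter,
      Set.mem_preimage]
    exact ⟨fun h => ⟨h.1, fun c hc => ⟨h.1, h.2 c hc⟩⟩, fun h => ⟨h.1, fun c hc => (h.2 c hc).2⟩⟩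
  rw [hS]
  refine hC.inter (isClosed_biInter fun c hc => ?_)
  have hmul : ContinuousOn (mul c) C :=
    hG.continuousOn_mul.comp (Continuous.prodMk_right c).continuousOn
      fun x hx => hCdom ⟨hc, hx⟩
  exact hmul.preimage_isClosed_of_isClosed hC hC

theorem isLGSubgroup_rightStabilizer_inter_inv (hG : IsLocalGroup one inv dom mul)
    (hC : one ∈ C) (hCdom : C ×ˢ C ⊆ dom) :
    IsLGSubgroup one inv dom mul (rightStabilizer mul C ∩ inv ⁻¹' rightStabilizer mul C) := by
  set S := rightStabilizer mul C
  have hxy : ∀ x ∈ S, ∀ y ∈ S, (x, y) ∈ dom := fun x hx y hy =>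
    hCdom ⟨rightStabilizer_subset hx, rightStabilizer_subset hy⟩
  refine ⟨fun x => ?_, ⟨one_mem_rightStabilizer hG hC, ?_⟩, fun x hx y hy => ⟨hxy x hx.1 y hy.1, ?_⟩⟩
  · simp only [Set.mem_inter_iff, Set.mem_preimage, hG.inv_inv, and_comm]
  · rw [Set.mem_preimage, hG.inv_one]
    exact one_mem_rightStabilizer hG hC
  · refine ⟨mul_mem_rightStabilizer hG hCdom hx.1 hy.1, ?_⟩
    rw [Set.mem_preimage, hG.mul_inv_rev (hxy x hx.1 y hy.1) (hxy _ hy.2 _ hx.2)]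
    exact mul_mem_rightStabilizer hG hCdom hy.2 hx.2

end RightStabilizer

namespace IsLGSubgroup

variable {G : Type u} {one : G} {inv : G → G}
  {dom : Set (G × G)} {mul : G → G → G} {H : Set G}

theorem inv_mem (hH : IsLGSubgroup one inv dom mul H) {x : G} (hx : x ∈ H) : inv x ∈ H :=
  (hH.1 x).1 hx

theorem mul_mem (hH : IsLGSubgroup one inv dom mul H) {x y : G} (hx : x ∈ H) (hy : y ∈ H) :
    mul x y ∈ H :=
  (hH.2.2 x hx y hy).2

theorem mem_dom (hH : IsLGSubgroup one inv dom mul H) {x y : G} (hx : x ∈ H) (hy : y ∈ H) :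
    (x, y) ∈ dom :=
  (hH.2.2 x hx y hy).1

abbrev toGroup [TopologicalSpace G] (hG : IsLocalGroup one inv dom mul) (hH : IsLGSubgroup one inv dom mul H) :
    Group ↥H :=
  letI : One ↥H := ⟨⟨one, hH.2.1⟩⟩
  letI : Mul ↥H := ⟨fun a b => ⟨mul a b, hH.mul_mem a.2 b.2⟩⟩
  letI : Inv ↥H := ⟨fun a => ⟨inv a, hH.inv_mem a.2⟩⟩
  Group.ofLeftAxioms
    (fun a b c => Subtype.ext (hG.assoc a b c (hH.mem_dom a.2 b.2) (hH.mem_dom b.2 c.2)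
      (Or.inl (hH.mem_dom (hH.mul_mem a.2 b.2) c.2))).2.2)
    (fun a => Subtype.ext (hG.one_mul a))
    (fun a => Subtype.ext (hG.inv_mul a))

theorem groupStructureCompatible [TopologicalSpace G] (hG : IsLocalGroup one inv dom mul)
    (hH : IsLGSubgroup one inv dom mul H) :
    @GroupStructureCompatible G _ one inv mul H (hH.toGroup hG) := by
  let := hH.toGroup hG
  refine ⟨rfl, fun _ _ => rfl, fun _ => rfl, ?_⟩
  have hval : Continuous fun p : ↥H × ↥H => ((p.1 : G), (p.2 : G)) := by fun_prop
  exact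
    { continuous_mul := (hG.continuousOn_mul.comp_continuous hval
        fun p => hH.mem_dom p.1.2 p.2.2).subtype_mk _
      continuous_inv := (hG.continuous_inv.comp continuous_subtype_val).subtype_mk _ }

end IsLGSubgroup

/-- Proposition 1.2. If `G` is a locally compact, totally
disconnected local group, then some restriction of `G` is a compact topological
group: there is a compact symmetric open neighborhood `U` of `1` with
`U × U ⊆ Ω` and `xy ∈ U` for all `x, y ∈ U`, and `U` with the induced operations
is a compact topological group. -/
theorem restriction_compact_group_of_totallyDisconnected
    {G : Type u} [TopologicalSpace G] (one : G) (inv : G → G)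
    (dom : Set (G × G)) (mul : G → G → G)
    (hG : IsLocalGroup one inv dom mul) (hLC : LocallyCompactSpace G)
    (htd : TotallyDisconnectedSpace G) :
    ∃ U : Set G, IsCompact U ∧ IsOpen U ∧ one ∈ U ∧ IsSymmetricSet inv U ∧
      (∀ x ∈ U, ∀ y ∈ U, (x, y) ∈ dom ∧ mul x y ∈ U) ∧
      ∃ gU : Group ↥U, @GroupStructureCompatible G _ one inv mul U gU := by
  have := hG.t2
  obtain ⟨O, hO, hO1, hOdom⟩ := hG.exists_isOpen_prod_subset_dom
  obtain ⟨C, hCc, hCo, hC1, hCO⟩ := exists_isCompact_isOpen_subset hO hO1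
  have hCdom : C ×ˢ C ⊆ dom := (Set.prod_mono hCO hCO).trans hOdom
  set S := rightStabilizer mul C
  have hU := isLGSubgroup_rightStabilizer_inter_inv hG hC1 hCdom
  have hSc : IsClosed S := isClosed_rightStabilizer hG hCc.isClosed hCdom
  have hSo : IsOpen S := isOpen_rightStabilizer hG hCc hCo hCdom
  refine ⟨S ∩ inv ⁻¹' S, ?_, hSo.inter (hSo.preimage hG.continuous_inv), hU.2.1, hU.1, hU.2.2,
    hU.toGroup hG, hU.groupStructureCompatible hG⟩
  exact hCc.of_isClosed_subset (hSc.inter (hSc.preimage hG.continuous_inv))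
    (Set.inter_subset_left.trans rightStabilizer_subset)
end

section
/- Let G be a local group and N a normal subgroup of G. If (a,b) ∈ Ω, then aN × bN ⊆ Ω and aN · bN = (ab)N, i.e., for all x,y ∈ N we have (ax, by) ∈ Ω and (ax)(by) ∈ (ab)N. -/
open scoped Topology

universe u v

/-
Normality gives `x b = b z` with `z = (b⁻¹ x) b ∈ N` for `x ∈ N`, so
`(a x)(b y) = a (x (b y)) = a ((x b) y) = a (b (z y)) = (a b)(z y)`. Every product occurring here
is defined because `N × G` and `G × N` lie in `Ω`, which lets local associativity re-bracket at
each step.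
-/

section LocalGroup

variable {G : Type u} {one : G} {inv : G → G} {dom : Set (G × G)}
  {mul : G → G → G}

namespace IsLocalGroup

variable [TopologicalSpace G] (hG : IsLocalGroup one inv dom mul)
include hG

theorem assoc_of_left {x y z : G} (hxy : (x, y) ∈ dom) (hyz : (y, z) ∈ dom)
    (hxy_z : (mul x y, z) ∈ dom) :
    (x, mul y z) ∈ dom ∧ mul (mul x y) z = mul x (mul y z) :=
  (hG.assoc x y z hxy hyz (Or.inl hxy_z)).2

theorem assoc_of_right {x y z : G} (hxy : (x, y) ∈ dom) (hyz : (y, z) ∈ dom)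
    (hx_yz : (x, mul y z) ∈ dom) :
    (mul x y, z) ∈ dom ∧ mul (mul x y) z = mul x (mul y z) :=
  let h := hG.assoc x y z hxy hyz (Or.inr hx_yz)
  ⟨h.1, h.2.2⟩

theorem inv_inv_s7 (x : G) : inv (inv x) = x := by
  have h := (hG.assoc_of_left (hG.mem_inv_left (inv x)) (hG.mem_inv_left x)
    (by rw [hG.inv_mul]; exact hG.mem_one_left x)).2
  rwa [hG.inv_mul, hG.inv_mul, hG.one_mul, hG.mul_one, eq_comm] at h

theorem mul_inv_mul_cancel {x y : G} (h : (inv x, y) ∈ dom) :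
    (x, mul (inv x) y) ∈ dom ∧ mul x (mul (inv x) y) = y := by
  obtain ⟨hdom, heq⟩ := hG.assoc_of_left (hG.mem_inv_right x) h
    (by rw [hG.mul_inv]; exact hG.mem_one_left y)
  rw [← heq, hG.mul_inv, hG.one_mul]
  exact ⟨hdom, rfl⟩

end IsLocalGroup

namespace IsLGNormalSubgroup

variable {N : Set G} (hN : IsLGNormalSubgroup one inv dom mul N)
include hN

theorem mem_dom_of_mem_right {x : G} (hx : x ∈ N) (g : G) : (g, x) ∈ dom :=
  (hN.2 x hx g).1.1

theorem mul_mem {x y : G} (hx : x ∈ N) (hy : y ∈ N) : mul x y ∈ N :=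
  (hN.1.2.2 x hx y hy).2

variable [TopologicalSpace G] (hG : IsLocalGroup one inv dom mul)
include hG

theorem mem_dom_of_mem_left {x : G} (hx : x ∈ N) (g : G) : (x, g) ∈ dom := by
  simpa only [hG.inv_inv_s7] using (hN.2 x hx (inv g)).1.2.1

theorem exists_mem_mul_eq_mul {x : G} (hx : x ∈ N) (b : G) :
    ∃ z ∈ N, mul x b = mul b z := by
  obtain ⟨⟨-, -, hconj⟩, hz⟩ := hN.2 x hx (inv b)
  rw [hG.inv_inv_s7] at hconj hz
  obtain ⟨hb, hcancel⟩ := hG.mul_inv_mul_cancel (hN.mem_dom_of_mem_right hx (inv b))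
  have hxb : (mul b (mul (inv b) x), b) ∈ dom := by
    rw [hcancel]; exact hN.mem_dom_of_mem_left hG hx b
  refine ⟨_, hz, ?_⟩
  rw [← (hG.assoc_of_left hb hconj hxb).2, hcancel]

theorem mul_mul_mem_lCoset {x y : G} (hx : x ∈ N) (hy : y ∈ N) (b : G) :
    (x, mul b y) ∈ dom ∧ mul x (mul b y) ∈ lCoset mul N b := by
  obtain ⟨z, hz, hxb⟩ := hN.exists_mem_mul_eq_mul hG hx b
  have hzy := hN.mul_mem hz hy
  obtain ⟨hbz_y, hbzy⟩ := hG.assoc_of_right (hN.mem_dom_of_mem_right hz b)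
    (hN.mem_dom_of_mem_left hG hz y) (hN.mem_dom_of_mem_right hzy b)
  obtain ⟨hdom, hxby⟩ := hG.assoc_of_left (hN.mem_dom_of_mem_left hG hx b)
    (hN.mem_dom_of_mem_right hy b) (hxb ▸ hbz_y)
  exact ⟨hdom, mul z y, hzy, by rw [← hxby, hxb, hbzy]⟩

end IsLGNormalSubgroup

end LocalGroup

/-- For a normal subgroup `N` of a local group `G` and
`(a, b) ∈ Ω`, we have `aN × bN ⊆ Ω` and `aN · bN = (ab)N`: for all `x, y ∈ N`,
`(ax, by) ∈ Ω` and `(ax)(by) ∈ (ab)N`. -/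
theorem coset_mul_coset
    {G : Type u} [TopologicalSpace G] (one : G) (inv : G → G)
    (dom : Set (G × G)) (mul : G → G → G)
    (hG : IsLocalGroup one inv dom mul)
    (N : Set G) (hN : IsLGNormalSubgroup one inv dom mul N)
    (a b : G) (hab : (a, b) ∈ dom) :
    ∀ x ∈ N, ∀ y ∈ N, (mul a x, mul b y) ∈ dom ∧
      mul (mul a x) (mul b y) ∈ lCoset mul N (mul a b) := by
  intro x hx y hy
  obtain ⟨hx_by, n, hn, hxby⟩ := hN.mul_mul_mem_lCoset hG hx hy b
  obtain ⟨ha_bn, habn⟩ := hG.assoc_of_left hab (hN.mem_dom_of_mem_right hn b)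
    (hN.mem_dom_of_mem_right hn _)
  obtain ⟨hdom, heq⟩ := hG.assoc_of_right (hN.mem_dom_of_mem_right hx a) hx_by
    (hxby ▸ ha_bn)
  exact ⟨hdom, n, hn, by rw [heq, hxby, habn]⟩
end
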